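/- If f : ℝ → ℝ is convex and f*(z) = sup_x (xz − f(x)) is its Fenchel conjugate, then for probability mass functions p, q on a finite set H with q strictly positive and any function w : H → ℝ, Σ_h p(h)·w(h) − Σ_h q(h)·f*(w(h)) ≤ D_f(p ‖ q). -/
import Mathlib

/-- Weak duality: for any w, E_p[w] - E_q[f*(w)] ≤ D_f(p‖q),
where f* is the Fenchel conjugate of the convex function f. -/
theorem f_divergence_weak_duality {H : Type*} [Fintype H]
    (f fstar : ℝ → ℝ) (hf : ConvexOn ℝ Set.univ f)
    (hconj : ∀ z : ℝ, IsLUB (Set.range fun x : ℝ => x * z - f x) (fstar z))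
    (p q : H → ℝ)
    (hp0 : ∀ h, 0 ≤ p h) (hp1 : ∑ h, p h = 1)
    (hq0 : ∀ h, 0 < q h) (hq1 : ∑ h, q h = 1)
    (w : H → ℝ) :
    (∑ h, p h * w h) - ∑ h, q h * fstar (w h)
      ≤ ∑ h, q h * f (p h / q h) := by
  rw [← Finset.sum_sub_distrib]
  apply Finset.sum_le_sum
  intro h _
  have hb : (p h / q h) * w h - f (p h / q h) ≤ fstar (w h) :=
    (hconj (w h)).1 ⟨p h / q h, rfl⟩
  have hq := hq0 h
  have := mul_le_mul_of_nonneg_left hb hq.le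
  rw [mul_sub, ← mul_assoc, mul_div_cancel₀ _ hq.ne'] at this
  linarith
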